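/- For fixed λ > 0, the leading-order asymptotics log g_λ(x) ∼ −x log(x/λ) + x holds as x → ∞; equivalently, log g_λ(x) / (x log x) → −1 as x → ∞. -/

import Mathlib

open Real Filter

/-- Upper incomplete gamma function `Γ(a, x) = ∫_x^∞ t^(a-1) e^(-t) dt`. -/
noncomputable def upperGamma (a x : ℝ) : ℝ := ∫ t in Set.Ioi x, t ^ (a - 1) * Real.exp (-t)

/-- `g_λ(x) = 1 − Γ(x+1, λ)/Γ(x+1)`. -/
noncomputable def gFun (lam x : ℝ) : ℝ := 1 - upperGamma (x + 1) lam / Real.Gamma (x + 1)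

/-! With the lower incomplete gamma function `γ(a, λ) = ∫₀^λ t^(a-1) e^(-t) dt` we have
`g_λ(x) = γ(x+1, λ) / Γ(x+1)`. The crude bounds `e^(-λ) λ^a / a ≤ γ(a, λ) ≤ λ^a / a` give
`log γ(x+1, λ) = O(x)`, while `e^(-(x+1)) x^x ≤ Γ(x+1) ≤ 2^(x+1) e^(-x) x^x` gives the weak
Stirling formula `log Γ(x+1) = x log x + O(x)`. Hence `log g_λ(x) ∼ -x log x`. -/

open MeasureTheory Set Asymptotics

noncomputable def lowerGamma (a x : ℝ) : ℝ := ∫ t in Ioc 0 x, t ^ (a - 1) * exp (-t)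

section IncompleteGamma

variable {a x : ℝ}

lemma integrableOn_rpow_mul_exp_neg_Ioi (ha : 0 < a) :
    IntegrableOn (fun t ↦ t ^ (a - 1) * exp (-t)) (Ioi 0) :=
  (GammaIntegral_convergent ha).congr_fun (fun _ _ ↦ mul_comm _ _) measurableSet_Ioi

lemma Gamma_eq_lowerGamma_add_upperGamma (ha : 0 < a) (hx : 0 ≤ x) :
    Gamma a = lowerGamma a x + upperGamma a x := by
  have hint := integrableOn_rpow_mul_exp_neg_Ioi ha
  rw [Gamma_eq_integral ha, lowerGamma, upperGamma,
    ← setIntegral_union (Ioc_disjoint_Ioi le_rfl) measurableSet_Ioi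
      (hint.mono_set Ioc_subset_Ioi_self) (hint.mono_set (Ioi_subset_Ioi hx)),
    Ioc_union_Ioi_eq_Ioi hx]
  exact setIntegral_congr_fun measurableSet_Ioi fun _ _ ↦ mul_comm _ _

lemma integral_rpow_sub_one_Ioc (ha : 0 < a) (hx : 0 ≤ x) :
    ∫ t in Ioc 0 x, t ^ (a - 1) = x ^ a / a := by
  rw [← intervalIntegral.integral_of_le hx, integral_rpow (Or.inl (by linarith)),
    sub_add_cancel, zero_rpow ha.ne']
  ring

lemma integrableOn_rpow_sub_one_Ioc (ha : 0 < a) (hx : 0 ≤ x) :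
    IntegrableOn (fun t : ℝ ↦ t ^ (a - 1)) (Ioc 0 x) :=
  (intervalIntegrable_iff_integrableOn_Ioc_of_le hx).1
    (intervalIntegral.intervalIntegrable_rpow' (by linarith))

lemma lowerGamma_le (ha : 0 < a) (hx : 0 ≤ x) : lowerGamma a x ≤ x ^ a / a := by
  rw [← integral_rpow_sub_one_Ioc ha hx]
  refine setIntegral_mono_on ((integrableOn_rpow_mul_exp_neg_Ioi ha).mono_set Ioc_subset_Ioi_self)
    (integrableOn_rpow_sub_one_Ioc ha hx) measurableSet_Ioc fun t ht ↦ ?_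
  exact mul_le_of_le_one_right (rpow_nonneg ht.1.le _) (exp_le_one_iff.2 (by linarith [ht.1]))

lemma exp_neg_mul_le_lowerGamma (ha : 0 < a) (hx : 0 ≤ x) :
    exp (-x) * (x ^ a / a) ≤ lowerGamma a x := by
  rw [← integral_rpow_sub_one_Ioc ha hx, ← integral_const_mul]
  refine setIntegral_mono_on ((integrableOn_rpow_sub_one_Ioc ha hx).const_mul _)
    ((integrableOn_rpow_mul_exp_neg_Ioi ha).mono_set Ioc_subset_Ioi_self) measurableSet_Ioc
    fun t ht ↦ ?_
  rw [mul_comm]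
  exact mul_le_mul_of_nonneg_left (exp_le_exp.2 (neg_le_neg ht.2)) (rpow_nonneg ht.1.le _)

lemma lowerGamma_pos (ha : 0 < a) (hx : 0 < x) : 0 < lowerGamma a x :=
  (mul_pos (exp_pos _) (by positivity)).trans_le (exp_neg_mul_le_lowerGamma ha hx.le)

lemma isBigO_log_lowerGamma (hx : 0 < x) :
    (fun a ↦ log (lowerGamma a x)) =O[atTop] id := by
  refine IsBigO.of_bound (x + |log x| + 1) ?_
  filter_upwards [eventually_ge_atTop 1] with a ha
  have ha0 : 0 < a := by linarith
  have hM : 0 < x ^ a / a := by positivity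
  have hL := lowerGamma_pos ha0 hx
  have hupper : log (lowerGamma a x) ≤ log (x ^ a / a) :=
    log_le_log hL (lowerGamma_le ha0 hx.le)
  have hlower : -x + log (x ^ a / a) ≤ log (lowerGamma a x) := by
    simpa [log_mul, hM.ne', log_exp] using
      log_le_log (by positivity) (exp_neg_mul_le_lowerGamma ha0 hx.le)
  rw [log_div (by positivity) ha0.ne', log_rpow hx] at hupper hlower
  have hloga : 0 ≤ log a ∧ log a ≤ a :=
    ⟨log_nonneg ha, (log_le_sub_one_of_pos ha0).trans (by linarith)⟩
  have habs : |a * log x| ≤ |log x| * a := by rw [abs_mul, abs_of_pos ha0, mul_comm]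
  rw [Real.norm_eq_abs, Real.norm_eq_abs, id, abs_of_pos ha0, abs_le]
  constructor <;> nlinarith [abs_le.1 habs]

end IncompleteGamma

section GammaBounds

variable {x : ℝ}

lemma exp_neg_mul_rpow_le {t : ℝ} (ht : 0 < t) (hx : 0 < x) :
    exp (-t) * t ^ x ≤ exp (-x) * x ^ x := by
  rw [rpow_def_of_pos ht, rpow_def_of_pos hx, ← exp_add, ← exp_add, exp_le_exp]
  have := mul_le_mul_of_nonneg_left (log_le_sub_one_of_pos (div_pos ht hx)) hx.le
  rw [log_div ht.ne' hx.ne', mul_sub, mul_sub, mul_one, mul_div_cancel₀ _ hx.ne'] at this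
  linarith

lemma Gamma_add_one_eq_integral (hx : 0 < x) :
    Gamma (x + 1) = ∫ t in Ioi 0, exp (-t) * t ^ x := by
  rw [Gamma_eq_integral (by linarith), add_sub_cancel_right]

lemma exp_neg_mul_rpow_le_Gamma_add_one (hx : 0 < x) :
    exp (-(x + 1)) * x ^ x ≤ Gamma (x + 1) := by
  have hint := GammaIntegral_convergent (show 0 < x + 1 by linarith)
  rw [add_sub_cancel_right] at hint
  have hsub : Ioc x (x + 1) ⊆ Ioi 0 := fun t ht ↦ hx.trans ht.1
  calc exp (-(x + 1)) * x ^ x = exp (-(x + 1)) * x ^ x * volume.real (Ioc x (x + 1)) := by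
        simp
    _ ≤ ∫ t in Ioc x (x + 1), exp (-t) * t ^ x :=
        setIntegral_ge_of_const_le_real measurableSet_Ioc (by simp)
          (fun t ht ↦ mul_le_mul (exp_le_exp.2 (by linarith [ht.2]))
            (rpow_le_rpow hx.le ht.1.le hx.le) (by positivity) (exp_pos _).le)
          (hint.mono_set hsub)
    _ ≤ Gamma (x + 1) := by
        rw [Gamma_add_one_eq_integral hx]
        refine setIntegral_mono_set hint ?_ hsub.eventuallyLE
        filter_upwards [self_mem_ae_restrict measurableSet_Ioi] with t ht
        exact mul_nonneg (exp_pos _).le (rpow_nonneg (le_of_lt ht) x)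

lemma Gamma_add_one_le (hx : 0 < x) :
    Gamma (x + 1) ≤ 2 ^ (x + 1) * (exp (-x) * x ^ x) := by
  -- Split `e^{-t} = e^{-t/2} e^{-t/2}` and bound `e^{-t/2} (t/2)^x` by its maximum, at `t/2 = x`.
  have hpt : ∀ t ∈ Ioi (0 : ℝ),
      exp (-t) * t ^ x ≤ 2 ^ x * (exp (-x) * x ^ x) * exp (-(1 / 2) * t) := by
    intro t (ht : 0 < t)
    have hsplit :
        exp (-t) * t ^ x = 2 ^ x * (exp (-(t / 2)) * (t / 2) ^ x) * exp (-(1 / 2) * t) := by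
      have hexp : exp (-t) = exp (-(t / 2)) * exp (-(1 / 2) * t) := by
        rw [← exp_add]; ring_nf
      rw [hexp, div_rpow ht.le zero_le_two]
      field_simp
    rw [hsplit]
    gcongr 2 ^ x * ?_ * _
    exact exp_neg_mul_rpow_le (half_pos ht) hx
  have hexp : ∫ t in Ioi 0, exp (-(1 / 2) * t) = 2 := by
    rw [integral_exp_mul_Ioi (by norm_num)]
    norm_num
  calc Gamma (x + 1) = ∫ t in Ioi 0, exp (-t) * t ^ x := Gamma_add_one_eq_integral hx
    _ ≤ ∫ t in Ioi 0, 2 ^ x * (exp (-x) * x ^ x) * exp (-(1 / 2) * t) := by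
        refine setIntegral_mono_on ?_ ((integrableOn_exp_mul_Ioi (by norm_num) 0).const_mul _)
          measurableSet_Ioi hpt
        simpa using GammaIntegral_convergent (show 0 < x + 1 by linarith)
    _ = 2 ^ (x + 1) * (exp (-x) * x ^ x) := by
        rw [integral_const_mul, hexp, rpow_add_one two_ne_zero]
        ring

lemma abs_log_Gamma_add_one_sub_le (hx : 0 < x) :
    |log (Gamma (x + 1)) - x * log x| ≤ x + 1 := by
  have hΓ := Gamma_pos_of_pos (show 0 < x + 1 by linarith)
  have hlower := log_le_log (by positivity) (exp_neg_mul_rpow_le_Gamma_add_one hx)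
  have hupper := log_le_log hΓ (Gamma_add_one_le hx)
  rw [log_mul (by positivity) (by positivity), log_exp, log_rpow hx] at hlower
  rw [log_mul (by positivity) (by positivity), log_mul (by positivity) (by positivity), log_exp,
    log_rpow two_pos, log_rpow hx] at hupper
  have hlog2 : log 2 ≤ 1 := (log_le_sub_one_of_pos two_pos).trans (by norm_num)
  rw [abs_le]
  constructor <;> nlinarith

end GammaBounds

lemma isLittleO_id_mul_log : (fun x : ℝ ↦ x) =o[atTop] fun x ↦ x * log x := by
  simpa using
    (isBigO_refl (fun x : ℝ ↦ x) atTop).mul_isLittleO (isLittleO_const_log_atTop (c := 1))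

lemma isLittleO_log_lowerGamma_add_one {x : ℝ} (hx : 0 < x) :
    (fun s ↦ log (lowerGamma (s + 1) x)) =o[atTop] fun s ↦ s * log s :=
  (((isBigO_log_lowerGamma hx).comp_tendsto (tendsto_atTop_add_const_right _ 1 tendsto_id)).trans
      ((isBigO_refl id _).add (isLittleO_const_id_atTop 1).isBigO)).trans_isLittleO
    isLittleO_id_mul_log

lemma isEquivalent_log_Gamma_add_one :
    (fun x ↦ log (Gamma (x + 1))) ~[atTop] fun x ↦ x * log x := by
  refine IsBigO.trans_isLittleO ?_ isLittleO_id_mul_log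
  refine IsBigO.of_bound 2 ?_
  filter_upwards [eventually_ge_atTop 1] with x hx
  rw [Pi.sub_apply, Real.norm_eq_abs, Real.norm_eq_abs, abs_of_pos (by linarith : (0:ℝ) < x)]
  linarith [abs_log_Gamma_add_one_sub_le (by linarith : (0:ℝ) < x)]

lemma gFun_eq_lowerGamma_div_Gamma {lam x : ℝ} (hlam : 0 ≤ lam) (hx : 0 < x + 1) :
    gFun lam x = lowerGamma (x + 1) lam / Gamma (x + 1) := by
  have hΓ := (Gamma_pos_of_pos hx).ne'
  rw [gFun, eq_div_iff hΓ, sub_mul, one_mul, div_mul_cancel₀ _ hΓ,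
    Gamma_eq_lowerGamma_add_upperGamma hx hlam, add_sub_cancel_right]

/-- Leading-order asymptotics: `log g_λ(x) / (x log x) → −1` as `x → ∞`. -/
theorem log_gFun_leading_asymptotic (lam : ℝ) (hlam : 0 < lam) :
    Tendsto (fun x : ℝ => Real.log (gFun lam x) / (x * Real.log x)) atTop (nhds (-1)) := by
  have hequiv : (fun x ↦ log (gFun lam x)) ~[atTop] fun x ↦ -(x * log x) := by
    refine ((isLittleO_log_lowerGamma_add_one hlam).neg_right.add_isEquivalent
      isEquivalent_log_Gamma_add_one.neg).congr_left ?_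
    filter_upwards [eventually_gt_atTop 0] with x hx
    rw [gFun_eq_lowerGamma_div_Gamma hlam.le (by linarith),
      log_div (lowerGamma_pos (by linarith) hlam).ne' (Gamma_pos_of_pos (by linarith)).ne']
    rfl
  refine (hequiv.div IsEquivalent.refl).symm.tendsto_nhds (tendsto_const_nhds.congr' ?_)
  filter_upwards [eventually_gt_atTop 1] with x hx
  rw [Pi.div_apply, neg_div, div_self (mul_pos (by linarith) (log_pos hx)).ne']
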